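/- arXiv:1804.02450 — 5 statements merged into one kernel-verified Lean document; each statement's English description precedes it below -/
import Mathlib

section
/- Let $N\geq 2$, $m\geq 3$, and let $(a,b)$ satisfy $N(m-2)/(2m-3) < a < N/2$, $2(m-1)/(N+(2m-3)a) < b \leq 2m/(N+(2m-1)a)$, and $b < 2/N$. Then $ab < 1$. -/
theorem stmt_0 (N a b : ℝ) (m : ℕ) (hN : 2 ≤ N) (hm : 3 ≤ m)
    (ha1 : N * (m - 2) / (2 * m - 3) < a) (ha2 : a < N / 2)
    (hb1 : 2 * (m - 1) / (N + (2 * m - 3) * a) < b)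
    (hb2 : b ≤ 2 * m / (N + (2 * m - 1) * a))
    (hb3 : b < 2 / N) :
    a * b < 1 := by
  have hm' : (3 : ℝ) ≤ (m : ℝ) := by exact_mod_cast hm
  have ha0 : 0 < a := by
    have h1 : (0 : ℝ) < 2 * (m : ℝ) - 3 := by linarith
    have h2 : (0 : ℝ) ≤ N * ((m : ℝ) - 2) / (2 * m - 3) := by
      apply div_nonneg (by nlinarith) h1.le
    linarith
  have hD : 0 < N + (2 * (m : ℝ) - 1) * a := by nlinarith
  have hkey : b * (N + (2 * (m : ℝ) - 1) * a) ≤ 2 * m := (le_div_iff₀ hD).mp hb2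
  have haN : a < N := by linarith
  nlinarith [mul_le_mul_of_nonneg_left hkey ha0.le]
end

section
/- Let $N\geq 2$, $m\geq 3$, and let $(a,b)$ satisfy $N(m-2)/(2m-3) < a < N/2$ and $2(m-1)/(N+(2m-3)a) < b \leq 2m/(N+(2m-1)a)$. Then $-\frac{(m+1)N}{2m(2m-3)} < a - N + \frac{1}{b} < \frac{N}{4(m-1)}$. -/
theorem stmt_1 (N a b : ℝ) (m : ℕ) (hN : 2 ≤ N) (hm : 3 ≤ m)
    (ha1 : N * (m - 2) / (2 * m - 3) < a) (ha2 : a < N / 2)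
    (hb1 : 2 * (m - 1) / (N + (2 * m - 3) * a) < b)
    (hb2 : b ≤ 2 * m / (N + (2 * m - 1) * a)) :
    -((m + 1) * N / (2 * m * (2 * m - 3))) < a - N + 1 / b ∧
      a - N + 1 / b < N / (4 * (m - 1)) := by
  have hM : (3:ℝ) ≤ (m:ℝ) := by exact_mod_cast hm
  have hN0 : (0:ℝ) < N := by linarith
  have hd1 : (0:ℝ) < 2 * (m:ℝ) - 3 := by linarith
  have ha0 : 0 < a := lt_trans (div_pos (mul_pos hN0 (by linarith)) hd1) ha1
  have hD1 : (0:ℝ) < N + (2 * m - 3) * a := by nlinarith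
  have hD2 : (0:ℝ) < N + (2 * m - 1) * a := by nlinarith
  have hb0 : 0 < b := lt_trans (div_pos (by linarith) hD1) hb1
  have hA : N * ((m:ℝ) - 2) < a * (2 * m - 3) := (div_lt_iff₀ hd1).mp ha1
  have hB : 2 * ((m:ℝ) - 1) < b * (N + (2 * m - 3) * a) := (div_lt_iff₀ hD1).mp hb1
  have hC : b * (N + (2 * m - 1) * a) ≤ 2 * m := (le_div_iff₀ hD2).mp hb2
  have h1b : N + (2 * m - 1) * a ≤ 1 / b * (2 * m) := by
    rw [div_mul_eq_mul_div, le_div_iff₀ hb0]; nlinarith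
  have h2b : 1 / b * (2 * ((m:ℝ) - 1)) < N + (2 * m - 3) * a := by
    rw [div_mul_eq_mul_div, div_lt_iff₀ hb0]; nlinarith
  constructor
  · rw [← neg_div, div_lt_iff₀ (by positivity)]
    nlinarith [mul_le_mul_of_nonneg_right h1b (le_of_lt hd1),
      mul_lt_mul_of_pos_right hA (show (0:ℝ) < 4 * m - 1 by linarith)]
  · rw [lt_div_iff₀ (by linarith : (0:ℝ) < 4 * ((m:ℝ) - 1))]
    nlinarith [mul_lt_mul_of_pos_right ha2 (show (0:ℝ) < 8 * (m:ℝ) - 10 by linarith)]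
end

section
/- Let $N\geq 2$, $m\geq 3$, and let $(a,b)$ satisfy $N(m-2)/(2m-3) < a < N/2$ and $2(m-1)/(N+(2m-3)a) < b \leq 2m/(N+(2m-1)a)$. Then for every $x \in [-a/2, 0]$, one has $-N/2 < x + \frac{m-1}{b} + (1-m)a < N/2$. -/
theorem stmt_2 (N a b : ℝ) (m : ℕ) (hN : 2 ≤ N) (hm : 3 ≤ m)
    (ha1 : N * (m - 2) / (2 * m - 3) < a) (ha2 : a < N / 2)
    (hb1 : 2 * (m - 1) / (N + (2 * m - 3) * a) < b)
    (hb2 : b ≤ 2 * m / (N + (2 * m - 1) * a)) :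
    ∀ x ∈ Set.Icc (-(a / 2)) (0 : ℝ),
      -(N / 2) < x + (m - 1) / b + (1 - m) * a ∧
        x + (m - 1) / b + (1 - m) * a < N / 2 := by
  intro x hx
  obtain ⟨hx1, hx2⟩ := hx
  have hM : (3 : ℝ) ≤ (m : ℝ) := by exact_mod_cast hm
  have hN0 : (0 : ℝ) < N := by linarith
  have ha0 : 0 < a := by
    have h0 : 0 < N * ((m : ℝ) - 2) / (2 * m - 3) :=
      div_pos (mul_pos hN0 (by linarith)) (by linarith)
    linarith
  have hden1 : (0 : ℝ) < N + (2 * m - 3) * a := by nlinarith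
  have hden2 : (0 : ℝ) < N + (2 * m - 1) * a := by nlinarith
  have hb0 : 0 < b := by
    have h0 : 0 < 2 * ((m : ℝ) - 1) / (N + (2 * m - 3) * a) :=
      div_pos (by linarith) hden1
    linarith
  have hb1' : 2 * ((m : ℝ) - 1) < b * (N + (2 * m - 3) * a) := by
    rw [div_lt_iff₀ hden1] at hb1; linarith
  have hb2' : b * (N + (2 * m - 1) * a) ≤ 2 * m := by
    rw [le_div_iff₀ hden2] at hb2; linarith
  have key1 : ((m : ℝ) - 1) / b < (N + (2 * m - 3) * a) / 2 := by
    rw [div_lt_div_iff₀ hb0 two_pos]; linarith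
  have key2 : ((m : ℝ) - 1) * (N + (2 * m - 1) * a) / (2 * m) ≤ ((m : ℝ) - 1) / b := by
    rw [div_le_div_iff₀ (by linarith) hb0]
    nlinarith [mul_le_mul_of_nonneg_left hb2' (show (0:ℝ) ≤ (m : ℝ) - 1 by linarith)]
  constructor
  · have aux : a / 2 - N / 2 + ((m : ℝ) - 1) * a <
        ((m : ℝ) - 1) * (N + (2 * m - 1) * a) / (2 * m) := by
      rw [lt_div_iff₀ (by linarith : (0:ℝ) < 2 * m)]
      nlinarith [mul_pos (show (0:ℝ) < 2 * m - 1 by linarith)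
        (show (0:ℝ) < N - a by linarith)]
    linarith
  · linarith
end

section
/- Let $N\geq 2$, $m\geq 3$, and let $(a,b)$ satisfy $N(m-2)/(2m-3) < a < N/2$, $2(m-1)/(N+(2m-3)a) < b \leq 2m/(N+(2m-1)a)$, and $b < 2/N$. Then for every integer $k$ with $|k| \leq m-1$ and every $x \in [-a/2, 0]$, one has $-N/2 < x + \frac{k}{b} - ka < N/2$. -/
/-!
Write `x + k/b - k a = x + k c` with `c = 1/b - a`. Since `b < 2/N` and `a < N/2`, we have
`a < N/2 < 1/b`, so `c > 0` and `|k c| ≤ (m - 1) c`. Clearing denominators, the lower bound on `b`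
is exactly `(m - 1) c < (N - a)/2`, which keeps `x + k c` inside `(-N/2, N/2)` for
`x ∈ [-a/2, 0]`.
-/

lemma add_int_mul_mem_Ioo {N a c K x : ℝ} {k : ℤ} (ha : 0 ≤ a) (hc : 0 ≤ c)
    (hKc : K * c < (N - a) / 2) (hk : |(k : ℝ)| ≤ K) (hx : x ∈ Set.Icc (-(a / 2)) 0) :
    -(N / 2) < x + k * c ∧ x + k * c < N / 2 := by
  have hkc : |(k : ℝ) * c| ≤ K * c := by
    rw [abs_mul, abs_of_nonneg hc]
    exact mul_le_mul_of_nonneg_right hk hc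
  obtain ⟨hkc_lower, hkc_upper⟩ := abs_le.mp hkc
  obtain ⟨hx_lower, hx_upper⟩ := hx
  constructor <;> linarith

lemma mul_one_div_sub_lt_of_div_lt {N a b K : ℝ} (hD : 0 < N + (2 * K - 1) * a) (hb : 0 < b)
    (h : 2 * K / (N + (2 * K - 1) * a) < b) :
    K * (1 / b - a) < (N - a) / 2 := by
  rw [div_lt_iff₀ hD] at h
  rw [show K * (1 / b - a) = K * (1 - a * b) / b by field_simp, div_lt_div_iff₀ hb two_pos]
  linarith

theorem stmt_3_general (N a b : ℝ) (m : ℕ) (hN : 2 ≤ N) (hm : 3 ≤ m)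
    (ha1 : N * (m - 2) / (2 * m - 3) < a) (ha2 : a < N / 2)
    (hb1 : 2 * (m - 1) / (N + (2 * m - 3) * a) < b)
    (hb3 : b < 2 / N) :
    ∀ k : ℤ, |k| ≤ (m : ℤ) - 1 →
      ∀ x ∈ Set.Icc (-(a / 2)) (0 : ℝ),
        -(N / 2) < x + (k : ℝ) / b - k * a ∧ x + (k : ℝ) / b - k * a < N / 2 := by
  intro k hk x hx
  have hm' : (3 : ℝ) ≤ m := by exact_mod_cast hm
  have hN0 : 0 < N := by linarith
  have ha : 0 < a := lt_of_le_of_lt (div_nonneg (mul_nonneg hN0.le (by linarith)) (by linarith)) ha1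
  have hD : 0 < N + (2 * ((m : ℝ) - 1) - 1) * a := by nlinarith
  have hb1' : 2 * ((m : ℝ) - 1) / (N + (2 * ((m : ℝ) - 1) - 1) * a) < b := by
    convert hb1 using 4; ring
  have hb : 0 < b := lt_of_le_of_lt (div_nonneg (by linarith) hD.le) hb1'
  have ha_lt : a < 1 / b := by
    calc a < N / 2 := ha2
      _ = 1 / (2 / N) := (one_div_div 2 N).symm
      _ < 1 / b := one_div_lt_one_div_of_lt hb hb3
  have hk' : |(k : ℝ)| ≤ (m : ℝ) - 1 := by exact_mod_cast hk
  have key := add_int_mul_mem_Ioo ha.le (sub_pos.mpr ha_lt).le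
    (mul_one_div_sub_lt_of_div_lt hD hb hb1') hk' hx
  rwa [show x + (k : ℝ) / b - k * a = x + k * (1 / b - a) by ring]

theorem stmt_3 (N a b : ℝ) (m : ℕ) (hN : 2 ≤ N) (hm : 3 ≤ m)
    (ha1 : N * (m - 2) / (2 * m - 3) < a) (ha2 : a < N / 2)
    (hb1 : 2 * (m - 1) / (N + (2 * m - 3) * a) < b)
    (hb2 : b ≤ 2 * m / (N + (2 * m - 1) * a))
    (hb3 : b < 2 / N) :
    ∀ k : ℤ, |k| ≤ (m : ℤ) - 1 →
      ∀ x ∈ Set.Icc (-(a / 2)) (0 : ℝ),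
        -(N / 2) < x + (k : ℝ) / b - k * a ∧ x + (k : ℝ) / b - k * a < N / 2 :=
  stmt_3_general N a b m hN hm ha1 ha2 hb1 hb3
end

section
/- Let $N\geq 2$, $m\geq 3$, and let $(a,b)$ satisfy $N(m-2)/(2m-3) < a < N/2$, $2(m-1)/(N+(2m-3)a) < b \leq 2m/(N+(2m-1)a)$, and $b < 2/N$. Let $g : \mathbb{R} \to \mathbb{R}$ be supported in $[-N/2, N/2]$ (i.e., $g(y) = 0$ whenever $|y| > N/2$). Then for every integer $k$ with $3-m \leq k \leq m-1$, every integer $\ell$ with $3-k \leq \ell \leq m-1$, and every $x \in [-a/2, 0]$, one has $g(x + \frac{k}{b} + \ell a) = 0$. -/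
/-!
Multiplying by `b`, the region inequalities `N (m-2) < (2m-3) a` and
`2 (m-1) < b (N + (2m-3) a)` give `N/2 < -a/2 + (3-m)/b + (m-1) a`. Since `a < N/2 < 1/b`, the
quantity `k/b + l a` only grows when `k` increases or `k + l` increases, so it is minimised over the
admissible `(k, l)` by `(3-m, m-1)`. Hence every point `x + k/b + l a` lies beyond `N/2`, outside the
support of `g`.
-/

lemma add_mul_le_add_mul_of_le {a p k₀ l₀ k l : ℝ} (ha : 0 ≤ a) (hap : a ≤ p) (hk : k₀ ≤ k)
    (hkl : k₀ + l₀ ≤ k + l) : k₀ * p + l₀ * a ≤ k * p + l * a := by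
  nlinarith [mul_nonneg (sub_nonneg.2 hk) (sub_nonneg.2 hap)]

lemma half_lt_of_mem_region {N a b m : ℝ} (hN : 0 < N) (hm : 3 ≤ m)
    (ha : N * (m - 2) / (2 * m - 3) < a) (hb : 2 * (m - 1) / (N + (2 * m - 3) * a) < b) :
    N / 2 < -(a / 2) + (3 - m) / b + (m - 1) * a := by
  rw [div_lt_iff₀ (by linarith)] at ha
  have hden : 0 < N + (2 * m - 3) * a := by nlinarith
  rw [div_lt_iff₀ hden] at hb
  have hb0 : 0 < b := by nlinarith
  -- `b ((2m-3) a - N) = b (N + (2m-3) a) · ((2m-3) a - N) / (N + (2m-3) a)`, and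
  -- `(m-1) ((2m-3) a - N) ≥ (m-3) (N + (2m-3) a)` is equivalent to `(2m-3) a ≥ (m-2) N`.
  have key : 2 * (m - 3) < b * ((2 * m - 3) * a - N) := by
    nlinarith [mul_lt_mul_of_pos_right hb (show 0 < (2 * m - 3) * a - N by nlinarith)]
  have : (m - 3) / b < ((2 * m - 3) * a - N) / 2 := by
    rw [div_lt_iff₀ hb0]; linarith
  have hneg : (3 - m) / b = -((m - 3) / b) := by ring
  linarith

theorem stmt_6_general (N a b : ℝ) (m : ℕ) (hN : 2 ≤ N) (hm : 3 ≤ m)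
    (ha1 : N * (m - 2) / (2 * m - 3) < a) (ha2 : a < N / 2)
    (hb1 : 2 * (m - 1) / (N + (2 * m - 3) * a) < b)
    (hb3 : b < 2 / N)
    (g : ℝ → ℝ) (hg : ∀ y : ℝ, |y| > N / 2 → g y = 0) :
    ∀ k : ℤ, 3 - (m : ℤ) ≤ k → k ≤ (m : ℤ) - 1 →
      ∀ l : ℤ, 3 - k ≤ l → l ≤ (m : ℤ) - 1 →
        ∀ x ∈ Set.Icc (-(a / 2)) (0 : ℝ),
          g (x + (k : ℝ) / b + (l : ℝ) * a) = 0 := by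
  intro k hk _ l hl _ x hx
  have hN0 : 0 < N := by linarith
  have hm' : (3 : ℝ) ≤ m := by exact_mod_cast hm
  have ha0 : 0 < a := lt_trans (div_pos (by nlinarith) (by linarith)) ha1
  have hb0 : 0 < b := lt_trans (div_pos (by linarith) (by nlinarith)) hb1
  have hab : a ≤ 1 / b := by
    refine (ha2.trans ?_).le
    rw [lt_one_div (by linarith) hb0]
    simpa [div_div_eq_mul_div] using hb3
  have hk' : (3 - m : ℝ) ≤ k := by exact_mod_cast hk
  have hkl : (3 - m : ℝ) + (m - 1) ≤ k + l := by
    have : (3 : ℤ) ≤ k + l := by omega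
    have : (3 : ℝ) ≤ k + l := by exact_mod_cast this
    linarith
  apply hg
  refine lt_of_lt_of_le ?_ (le_abs_self _)
  calc N / 2 < -(a / 2) + (3 - m) / b + (m - 1) * a := half_lt_of_mem_region hN0 hm' ha1 hb1
    _ = -(a / 2) + ((3 - m) * (1 / b) + (m - 1) * a) := by ring
    _ ≤ x + (k * (1 / b) + l * a) :=
      add_le_add hx.1 (add_mul_le_add_mul_of_le ha0.le hab hk' hkl)
    _ = x + k / b + l * a := by ring

theorem stmt_6 (N a b : ℝ) (m : ℕ) (hN : 2 ≤ N) (hm : 3 ≤ m)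
    (ha1 : N * (m - 2) / (2 * m - 3) < a) (ha2 : a < N / 2)
    (hb1 : 2 * (m - 1) / (N + (2 * m - 3) * a) < b)
    (hb2 : b ≤ 2 * m / (N + (2 * m - 1) * a))
    (hb3 : b < 2 / N)
    (g : ℝ → ℝ) (hg : ∀ y : ℝ, |y| > N / 2 → g y = 0) :
    ∀ k : ℤ, 3 - (m : ℤ) ≤ k → k ≤ (m : ℤ) - 1 →
      ∀ l : ℤ, 3 - k ≤ l → l ≤ (m : ℤ) - 1 →
        ∀ x ∈ Set.Icc (-(a / 2)) (0 : ℝ),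
          g (x + (k : ℝ) / b + (l : ℝ) * a) = 0 :=
  stmt_6_general N a b m hN hm ha1 ha2 hb1 hb3 g hg
end
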